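/- For a positive integer k, Re(c-k) > Re(b) > 0 and |x| < 1: ∫_0^1 y^{k-1} ₂F₁(a,[b,c-k;y];x) dy = (1/k)[ ₂F₁(a,b;c-k;x) − (Γ(c-k)Γ(b+k)/(Γ(b)Γ(c))) ₂F₁(a,b+k;c;x) ]. -/

import Mathlib

open Complex

/-- Incomplete beta function `B_y(x,z) = ∫_0^y t^(x-1) (1-t)^(z-1) dt`. -/
noncomputable def incBeta (y : ℝ) (x z : ℂ) : ℂ :=
  ∫ t in (0:ℝ)..y, (t:ℂ)^(x-1) * (1 - (t:ℂ))^(z-1)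

/-- Pochhammer symbol `(a)_n`. -/
noncomputable def poch (a : ℂ) (n : ℕ) : ℂ := ∏ i ∈ Finset.range n, (a + i)

/-- Incomplete Pochhammer ratio `[b,c;y]_n`. -/
noncomputable def ipochL (b c : ℂ) (y : ℝ) (n : ℕ) : ℂ :=
  incBeta y (b + n) (c - b) / Complex.betaIntegral b (c - b)

/-- Incomplete Pochhammer ratio `{b,c;y}_n`. -/
noncomputable def ipochU (b c : ℂ) (y : ℝ) (n : ℕ) : ℂ :=
  incBeta (1 - y) (c - b) (b + n) / Complex.betaIntegral b (c - b)

/-- Gauss hypergeometric series `₂F₁(a,b;c;x)`. -/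
noncomputable def hyp2F1 (a b c x : ℂ) : ℂ :=
  ∑' n : ℕ, poch a n * poch b n / poch c n * x^n / (n.factorial : ℂ)

/-- Incomplete Gauss hypergeometric function `₂F₁(a,[b,c;y];x)`. -/
noncomputable def inc2F1L (a b c : ℂ) (y : ℝ) (x : ℂ) : ℂ :=
  ∑' n : ℕ, poch a n * ipochL b c y n * x^n / (n.factorial : ℂ)

/-- Incomplete Gauss hypergeometric function `₂F₁(a,{b,c;y};x)`. -/
noncomputable def inc2F1U (a b c : ℂ) (y : ℝ) (x : ℂ) : ℂ :=
  ∑' n : ℕ, poch a n * ipochU b c y n * x^n / (n.factorial : ℂ)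

/-- Incomplete confluent hypergeometric function `₁F₁([a,b;y];x)`. -/
noncomputable def inc1F1L (a b : ℂ) (y : ℝ) (x : ℂ) : ℂ :=
  ∑' n : ℕ, ipochL a b y n * x^n / (n.factorial : ℂ)

/-- Incomplete confluent hypergeometric function `₁F₁({a,b;y};x)`. -/
noncomputable def inc1F1U (a b : ℂ) (y : ℝ) (x : ℂ) : ℂ :=
  ∑' n : ℕ, ipochU a b y n * x^n / (n.factorial : ℂ)

/-- Incomplete Appell function `F₁[a,b,c;d;x,z;y]`. -/
noncomputable def incAppellF1 (a b c d x z : ℂ) (y : ℝ) : ℂ :=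
  ∑' p : ℕ × ℕ, ipochL a d y (p.1 + p.2) * poch b p.1 * poch c p.2 *
    x^p.1 * z^p.2 / ((p.1.factorial : ℂ) * (p.2.factorial : ℂ))

/-- Incomplete Riemann–Liouville fractional derivative `D_z^μ[f(z);y]`. -/
noncomputable def incRL (μ : ℂ) (f : ℂ → ℂ) (y : ℝ) (z : ℂ) : ℂ :=
  z^(-μ) / Complex.Gamma (-μ) * ∫ u in (0:ℝ)..y, f ((u:ℂ) * z) * (1 - (u:ℂ))^(-μ-1)

/-!
Expand `₂F₁(a,[b,c-k;y];x)` termwise. Since `d/dy B_y(u,v) = y^(u-1) (1-y)^(v-1)`, the function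
`(y^k B_y(u,v) - B_y(u+k,v)) / k` is a primitive of `y^(k-1) B_y(u,v)`, so
`∫₀¹ y^(k-1) B_y(u,v) dy = (B(u,v) - B(u+k,v)) / k`. With `v = c - k - b`, the identity
`B(b+n,v) / B(b,v) = (b)_n / (c-k)_n` turns the two terms into the coefficients of the two Gauss
series; the Gamma factor is `(b)_k / (c-k)_k`, split off from `(b)_(k+n) / (c-k)_(k+n)`.

Summation and integration commute by dominated convergence:
`|B_y(b+n,v)| ≤ ∫₀¹ |t^(b-1) (1-t)^(v-1)| dt` for all `y ∈ [0,1]` and all `n`, and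
`Σ |(a)_n| |x|^n / n!` converges for `|x| < 1`, being dominated by `Σ C(n+N,N) |x|^n` with
`N = ⌈|a|⌉`.
-/

open Set MeasureTheory

lemma poch_succ (a : ℂ) (n : ℕ) : poch a (n + 1) = poch a n * (a + n) :=
  Finset.prod_range_succ _ _

lemma poch_add (a : ℂ) (m n : ℕ) : poch a (m + n) = poch a m * poch (a + m) n := by
  simp only [poch, Finset.prod_range_add, Nat.cast_add, add_assoc]

lemma poch_eq_ascPochhammer_eval (a : ℂ) (n : ℕ) : poch a n = (ascPochhammer ℂ n).eval a := by
  induction n with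
  | zero => simp [poch]
  | succ n ih => rw [poch_succ, ascPochhammer_succ_eval, ih]

lemma ne_neg_natCast_of_re_pos {a : ℂ} (ha : 0 < a.re) (m : ℕ) : a ≠ -m := by
  rintro rfl
  simp only [neg_re, natCast_re, Left.neg_pos_iff] at ha
  linarith [(m.cast_nonneg : (0:ℝ) ≤ m)]

lemma Gamma_add_nat {a : ℂ} (ha : ∀ m : ℕ, a ≠ -m) (n : ℕ) :
    Gamma (a + n) = poch a n * Gamma a := by
  rw [poch_eq_ascPochhammer_eval, ← Gamma_add_nat_div_Gamma_eq a ha,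
    div_mul_cancel₀ _ (Gamma_ne_zero ha)]

lemma Gamma_mul_Gamma_add_nat_div {b d : ℂ} (hb : 0 < b.re) (hd : 0 < d.re) (k : ℕ) :
    Gamma d * Gamma (b + k) / (Gamma b * Gamma (d + k)) = poch b k / poch d k := by
  have hb' := ne_neg_natCast_of_re_pos hb
  have hd' := ne_neg_natCast_of_re_pos hd
  rw [Gamma_add_nat hb' k, Gamma_add_nat hd' k]
  field_simp [Gamma_ne_zero hb', Gamma_ne_zero hd']

lemma betaIntegral_eq_Gamma_mul_div {u v : ℂ} (hu : 0 < u.re) (hv : 0 < v.re) :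
    betaIntegral u v = Gamma u * Gamma v / Gamma (u + v) := by
  rw [Gamma_mul_Gamma_eq_betaIntegral hu hv, mul_div_cancel_left₀]
  exact Gamma_ne_zero_of_re_pos (by rw [add_re]; positivity)

lemma betaIntegral_ne_zero {u v : ℂ} (hu : 0 < u.re) (hv : 0 < v.re) : betaIntegral u v ≠ 0 := by
  rw [betaIntegral_eq_Gamma_mul_div hu hv]
  exact div_ne_zero (mul_ne_zero (Gamma_ne_zero_of_re_pos hu) (Gamma_ne_zero_of_re_pos hv))
    (Gamma_ne_zero_of_re_pos (by rw [add_re]; positivity))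

lemma betaIntegral_add_nat {u v : ℂ} (hu : 0 < u.re) (hv : 0 < v.re) (n : ℕ) :
    betaIntegral (u + n) v = poch u n / poch (u + v) n * betaIntegral u v := by
  have huv : 0 < (u + v).re := by rw [add_re]; positivity
  have hun : 0 < (u + n).re := by simp; positivity
  rw [betaIntegral_eq_Gamma_mul_div hun hv, betaIntegral_eq_Gamma_mul_div hu hv,
    add_right_comm, Gamma_add_nat (ne_neg_natCast_of_re_pos hu),
    Gamma_add_nat (ne_neg_natCast_of_re_pos huv), mul_assoc, mul_div_mul_comm]

lemma incBeta_one (u v : ℂ) : incBeta 1 u v = betaIntegral u v := rfl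

lemma ipochL_one {b c : ℂ} (hb : 0 < b.re) (hbc : b.re < c.re) (n : ℕ) :
    ipochL b c 1 n = poch b n / poch c n := by
  have hcb : 0 < (c - b).re := by rw [sub_re]; linarith
  rw [ipochL, incBeta_one, betaIntegral_add_nat hb hcb, add_sub_cancel,
    mul_div_cancel_right₀ _ (betaIntegral_ne_zero hb hcb)]

lemma continuousAt_betaIntegrand (u v : ℂ) {t : ℝ} (ht : t ∈ Ioo (0:ℝ) 1) :
    ContinuousAt (fun t : ℝ => (t:ℂ)^(u-1) * (1 - (t:ℂ))^(v-1)) t := by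
  have h0 : (t:ℂ) ∈ slitPlane := ofReal_mem_slitPlane.2 ht.1
  have h1 : 1 - (t:ℂ) ∈ slitPlane := by
    rw [← ofReal_one, ← ofReal_sub]; exact ofReal_mem_slitPlane.2 (by linarith [ht.2])
  exact (continuous_ofReal.continuousAt.cpow continuousAt_const h0).mul
    ((continuous_const.sub continuous_ofReal).continuousAt.cpow continuousAt_const h1)

lemma continuousOn_incBeta {u v : ℂ} (hu : 0 < u.re) (hv : 0 < v.re) :
    ContinuousOn (fun y : ℝ => incBeta y u v) (Icc 0 1) := by
  have h := intervalIntegral.continuousOn_primitive_interval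
    ((intervalIntegrable_iff' (by finiteness)).1 (betaIntegral_convergent hu hv))
  rwa [uIcc_of_le zero_le_one] at h

lemma hasDerivAt_incBeta {u v : ℂ} (hu : 0 < u.re) (hv : 0 < v.re) {y : ℝ}
    (hy : y ∈ Ioo (0:ℝ) 1) :
    HasDerivAt (fun y : ℝ => incBeta y u v) ((y:ℂ)^(u-1) * (1 - (y:ℂ))^(v-1)) y :=
  intervalIntegral.integral_hasDerivAt_right
    ((betaIntegral_convergent hu hv).mono_set (uIcc_subset_uIcc_left (by
      rw [uIcc_of_le zero_le_one]; exact Ioo_subset_Icc_self hy)))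
    (ContinuousAt.stronglyMeasurableAtFilter isOpen_Ioo
      (fun _ ht => continuousAt_betaIntegrand u v ht) y hy)
    (continuousAt_betaIntegrand u v hy)

lemma ofReal_cpow_add_nat {t : ℝ} (ht : 0 < t) (u : ℂ) (n : ℕ) :
    (t:ℂ)^(u + n) = (t:ℂ)^u * (t:ℂ)^n := by
  rw [cpow_add _ _ (ofReal_ne_zero.2 ht.ne'), cpow_natCast]

lemma norm_incBeta_add_nat_le {u v : ℂ} (hu : 0 < u.re) (hv : 0 < v.re) {y : ℝ}
    (hy : y ∈ Icc (0:ℝ) 1) (n : ℕ) :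
    ‖incBeta y (u + n) v‖ ≤ ∫ t in (0:ℝ)..1, ‖(t:ℂ)^(u-1) * (1 - (t:ℂ))^(v-1)‖ := by
  have hint := (betaIntegral_convergent hu hv).norm
  calc ‖incBeta y (u + n) v‖
      ≤ ∫ t in (0:ℝ)..y, ‖(t:ℂ)^(u-1) * (1 - (t:ℂ))^(v-1)‖ := by
        refine intervalIntegral.norm_integral_le_of_norm_le hy.1 (ae_of_all _ fun t ht => ?_)
          (hint.mono_set (uIcc_subset_uIcc_left (by simpa [uIcc_of_le zero_le_one] using hy)))
        have ht1 : t ≤ 1 := ht.2.trans hy.2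
        rw [add_sub_right_comm, ofReal_cpow_add_nat ht.1, mul_right_comm, norm_mul _ (_ ^ n),
          norm_pow, norm_real, Real.norm_of_nonneg ht.1.le]
        exact mul_le_of_le_one_right (norm_nonneg _) (pow_le_one₀ ht.1.le ht1)
    _ ≤ ∫ t in (0:ℝ)..1, ‖(t:ℂ)^(u-1) * (1 - (t:ℂ))^(v-1)‖ :=
        intervalIntegral.integral_mono_interval le_rfl hy.1 hy.2
          (ae_of_all _ fun _ => norm_nonneg _) hint

lemma integral_pow_mul_incBeta {u v : ℂ} (hu : 0 < u.re) (hv : 0 < v.re) {k : ℕ} (hk : k ≠ 0) :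
    ∫ y in (0:ℝ)..1, (y:ℂ)^(k-1) * incBeta y u v
      = (betaIntegral u v - betaIntegral (u + k) v) / k := by
  have hk' : (k:ℂ) ≠ 0 := Nat.cast_ne_zero.2 hk
  have huk : 0 < (u + k).re := by simp; positivity
  let H : ℝ → ℂ := fun y => ((y:ℂ)^k * incBeta y u v - incBeta y (u + k) v) / k
  have hH : ContinuousOn H (Icc 0 1) :=
    ((((continuous_ofReal.pow k).continuousOn).mul (continuousOn_incBeta hu hv)).sub
      (continuousOn_incBeta huk hv)).div_const _
  have hH' : ∀ y ∈ Ioo (0:ℝ) 1, HasDerivAt H ((y:ℂ)^(k-1) * incBeta y u v) y := by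
    intro y hy
    refine ((((hasDerivAt_pow k (y:ℂ)).comp_ofReal).mul (hasDerivAt_incBeta hu hv hy)).sub
      (hasDerivAt_incBeta huk hv hy)).div_const (k:ℂ) |>.congr_deriv ?_
    rw [add_sub_right_comm u, ofReal_cpow_add_nat hy.1]
    field_simp
    ring
  rw [intervalIntegral.integral_eq_sub_of_hasDeriv_right_of_le zero_le_one hH
    (fun y hy => (hH' y hy).hasDerivWithinAt)
    ((((continuous_ofReal.pow _).continuousOn).mul
      (continuousOn_incBeta hu hv)).intervalIntegrable_of_Icc zero_le_one)]
  simp [H, incBeta, hk, betaIntegral]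

lemma exists_norm_ipochL_le {b c : ℂ} (hb : 0 < b.re) (hbc : b.re < c.re) :
    ∃ M, ∀ y ∈ Icc (0:ℝ) 1, ∀ n, ‖ipochL b c y n‖ ≤ M := by
  have hcb : 0 < (c - b).re := by rw [sub_re]; linarith
  refine ⟨(∫ t in (0:ℝ)..1, ‖(t:ℂ)^(b-1) * (1 - (t:ℂ))^(c-b-1)‖) / ‖betaIntegral b (c - b)‖,
    fun y hy n => ?_⟩
  rw [ipochL, norm_div]
  gcongr
  exact norm_incBeta_add_nat_le hb hcb hy n

lemma norm_poch_le_ascFactorial (a : ℂ) (n : ℕ) :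
    ‖poch a n‖ ≤ (⌈‖a‖⌉₊ + 1).ascFactorial n := by
  induction n with
  | zero => simp [poch]
  | succ n ih =>
    rw [poch_succ, norm_mul, Nat.ascFactorial_succ, Nat.cast_mul, mul_comm]
    gcongr
    calc ‖a + n‖ ≤ ‖a‖ + n := by simpa using norm_add_le a n
      _ ≤ _ := by push_cast; linarith [Nat.le_ceil ‖a‖]

lemma summable_norm_poch_mul_pow_div_factorial (a : ℂ) {x : ℂ} (hx : ‖x‖ < 1) :
    Summable fun n => ‖poch a n‖ * ‖x‖^n / n.factorial := by
  refine (summable_choose_mul_geometric_of_norm_lt_one ⌈‖a‖⌉₊ (r := ‖x‖) (by simpa)).of_nonneg_of_le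
    (fun n => by positivity) fun n => ?_
  rw [div_le_iff₀ (by positivity), mul_right_comm]
  gcongr
  calc ‖poch a n‖ ≤ (⌈‖a‖⌉₊ + 1).ascFactorial n := norm_poch_le_ascFactorial a n
    _ = _ := by
      rw [Nat.ascFactorial_eq_factorial_mul_choose, add_comm n, Nat.choose_symm_add]
      push_cast
      ring

lemma norm_poch_mul_mul_pow_div_factorial_le (a : ℂ) {p : ℂ} {M : ℝ} (hp : ‖p‖ ≤ M) (x : ℂ)
    (n : ℕ) :
    ‖poch a n * p * x^n / n.factorial‖ ≤ M * (‖poch a n‖ * ‖x‖^n / n.factorial) := by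
  rw [norm_div, norm_mul, norm_mul, norm_pow, norm_natCast]
  have := (norm_nonneg p).trans hp
  calc ‖poch a n‖ * ‖p‖ * ‖x‖^n / n.factorial ≤ ‖poch a n‖ * M * ‖x‖^n / n.factorial := by
        gcongr
    _ = _ := by ring

lemma summable_inc2F1L_term (a : ℂ) {b c x : ℂ} (hb : 0 < b.re) (hbc : b.re < c.re)
    (hx : ‖x‖ < 1) {y : ℝ} (hy : y ∈ Icc (0:ℝ) 1) :
    Summable fun n => poch a n * ipochL b c y n * x^n / n.factorial := by
  obtain ⟨M, hM⟩ := exists_norm_ipochL_le hb hbc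
  exact ((summable_norm_poch_mul_pow_div_factorial a hx).mul_left M).of_norm_bounded
    fun n => norm_poch_mul_mul_pow_div_factorial_le a (hM y hy n) x n

lemma hasSum_hyp2F1 (a : ℂ) {b c x : ℂ} (hb : 0 < b.re) (hbc : b.re < c.re) (hx : ‖x‖ < 1) :
    HasSum (fun n => poch a n * poch b n / poch c n * x^n / n.factorial) (hyp2F1 a b c x) := by
  refine ((summable_inc2F1L_term a hb hbc hx (right_mem_Icc.2 zero_le_one)).congr
    fun n => ?_).hasSum
  rw [ipochL_one hb hbc]
  ring

lemma hasSum_integral_mul_inc2F1L_term {f : ℝ → ℂ} (hf : IntervalIntegrable f volume 0 1)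
    (a : ℂ) {b c x : ℂ} (hb : 0 < b.re) (hbc : b.re < c.re) (hx : ‖x‖ < 1) :
    HasSum (fun n => ∫ y in (0:ℝ)..1, f y * (poch a n * ipochL b c y n * x^n / n.factorial))
      (∫ y in (0:ℝ)..1, f y * inc2F1L a b c y x) := by
  have hcb : 0 < (c - b).re := by rw [sub_re]; linarith
  obtain ⟨M, hM⟩ := exists_norm_ipochL_le hb hbc
  have hS := summable_norm_poch_mul_pow_div_factorial a hx
  have hIoc : uIoc (0:ℝ) 1 ⊆ Icc 0 1 := by rw [uIoc_of_le zero_le_one]; exact Ioc_subset_Icc_self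
  refine intervalIntegral.hasSum_integral_of_dominated_convergence
    (fun n y => ‖f y‖ * (M * (‖poch a n‖ * ‖x‖^n / n.factorial))) (fun n => ?_)
    (fun n => ae_of_all _ fun y hy => ?_) (ae_of_all _ fun y _ => (hS.mul_left M).mul_left _) ?_
    (ae_of_all _ fun y hy => ?_)
  · refine hf.def'.aestronglyMeasurable.mul
      (ContinuousOn.aestronglyMeasurable ?_ measurableSet_uIoc)
    refine ((continuousOn_const.mul ?_).mul continuousOn_const).div_const _ |>.mono hIoc
    exact (continuousOn_incBeta (by simp; positivity) hcb).div_const _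
  · rw [norm_mul]
    gcongr
    exact norm_poch_mul_mul_pow_div_factorial_le a (hM y (hIoc hy) n) x n
  · simp_rw [tsum_mul_left]
    exact hf.norm.mul_const _
  · exact (summable_inc2F1L_term a hb hbc hx (hIoc hy)).hasSum.mul_left (f y)

lemma integral_pow_mul_ipochL {b c : ℂ} (hb : 0 < b.re) (hbc : b.re < c.re) {k : ℕ} (hk : k ≠ 0)
    (n : ℕ) :
    ∫ y in (0:ℝ)..1, (y:ℂ)^(k-1) * ipochL b c y n =
      (ipochL b c 1 n - ipochL b c 1 (n + k)) / k := by
  have hcb : 0 < (c - b).re := by rw [sub_re]; linarith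
  simp only [ipochL, ← mul_div_assoc, intervalIntegral.integral_div, incBeta_one, Nat.cast_add,
    ← add_assoc]
  rw [integral_pow_mul_incBeta (by simp; positivity) hcb hk]
  ring

lemma integral_pow_mul_ipochL_sub_nat {b c : ℂ} (hb : 0 < b.re) {k : ℕ} (hk : k ≠ 0)
    (hbc : b.re < (c - k).re) (n : ℕ) :
    ∫ y in (0:ℝ)..1, (y:ℂ)^(k-1) * ipochL b (c - k) y n =
      (poch b n / poch (c - k) n - Gamma (c - k) * Gamma (b + k) / (Gamma b * Gamma c) *
        (poch (b + k) n / poch c n)) / k := by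
  have hC : Gamma (c - k) * Gamma (b + k) / (Gamma b * Gamma c) = poch b k / poch (c - k) k := by
    simpa using Gamma_mul_Gamma_add_nat_div hb (hb.trans hbc) k
  rw [integral_pow_mul_ipochL hb hbc hk, ipochL_one hb hbc, ipochL_one hb hbc, add_comm n,
    poch_add, poch_add, mul_div_mul_comm, sub_add_cancel, hC]

theorem stmt9 (a b c : ℂ) (x : ℂ) (k : ℕ) (hk : 1 ≤ k)
    (hb : 0 < b.re) (hbc : b.re < (c - k).re) (hx : ‖x‖ < 1) :
    (∫ y in (0:ℝ)..1, (y:ℂ)^(k - 1) * inc2F1L a b (c - k) y x) =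
      (1 / (k:ℂ)) * (hyp2F1 a b (c - k) x -
        (Complex.Gamma (c - k) * Complex.Gamma (b + k) /
          (Complex.Gamma b * Complex.Gamma c)) * hyp2F1 a (b + k) c x) := by
  have hk0 : k ≠ 0 := by omega
  have hbk : 0 < (b + k).re := by simp; positivity
  have hbkc : (b + k).re < c.re := by simp at hbc ⊢; linarith
  have hLHS := hasSum_integral_mul_inc2F1L_term (f := fun y : ℝ => (y:ℂ)^(k - 1))
    ((continuous_ofReal.pow (k - 1)).intervalIntegrable 0 1) a hb hbc hx
  have hRHS := ((hasSum_hyp2F1 a hb hbc hx).sub ((hasSum_hyp2F1 a hbk hbkc hx).mul_left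
    (Gamma (c - k) * Gamma (b + k) / (Gamma b * Gamma c)))).mul_left (1 / (k:ℂ))
  refine hLHS.unique (hRHS.congr_fun fun n => ?_)
  have hterm : ∀ y : ℝ, (y:ℂ)^(k - 1) * (poch a n * ipochL b (c - k) y n * x^n / n.factorial) =
      poch a n * x^n / n.factorial * ((y:ℂ)^(k - 1) * ipochL b (c - k) y n) := fun y => by ring
  simp only [hterm, intervalIntegral.integral_const_mul, integral_pow_mul_ipochL_sub_nat hb hk0 hbc]
  ring
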